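/- (Theorem 2, asymptotic feasibility.) Under the stated setup, if there exist α* ∈ ℝⁿ and ω* ∈ ℝ^p with Z·α* = 0 and Φ(a) + ⟨ω*, Z·a⟩ ≥ Φ(α*) for all a ∈ ℝⁿ, then ω(t+1) − ω((t−d)⁺) → 0 as t → ∞, and consequently Z·α(t) → 0 as t → ∞. -/

import Mathlib

/-!
Let `(αs, ωs)` be the saddle point and `M = Zᵀ S Z`. The three-point inequality of the proximal
step, the descent lemma for `Hs` and the saddle inequality show that
`V t = ‖ωs - ω t‖²_{S⁻¹} + ‖αs - α t‖²_{C⁻¹}` decreases from `t - d` and `t` to `t + 1` by at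
least `‖α (t - d)‖²_M`, up to the delay error `‖α (t + 1) - α (t - d)‖²_M`. That error is at most
`(d + 1)` times the sum of the last `d + 1` squared increments, and once summed over `t` it is
absorbed by the step-size condition `C⁻¹ - H - (1 + d)² Zᵀ S Z ⪰ 0`. Hence `∑ ‖Z α t‖²_S < ∞`,
so `Z α t → 0`, and `ω (t + 1) - ω (t - d) = S Z α (t + 1) → 0`.
-/

open Matrix Finset Filter

/-- The quadratic form `‖x‖²_A = xᵀ A x`. -/
noncomputable def qf {k : ℕ} (A : Matrix (Fin k) (Fin k) ℝ) (x : Fin k → ℝ) : ℝ :=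
  x ⬝ᵥ (A *ᵥ x)

open scoped Topology

section QuadraticForm

variable {k : ℕ} {A B : Matrix (Fin k) (Fin k) ℝ}

lemma Matrix.IsSymm.dotProduct_mulVec_comm (hA : A.IsSymm) (x y : Fin k → ℝ) :
    x ⬝ᵥ A *ᵥ y = y ⬝ᵥ A *ᵥ x := by
  rw [dotProduct_mulVec, ← mulVec_transpose, hA.eq, dotProduct_comm]

lemma qf_nonneg (hA : A.PosSemidef) (x : Fin k → ℝ) : 0 ≤ qf A x := by
  have h := hA.dotProduct_mulVec_nonneg x
  rwa [star_trivial] at h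

lemma sub_qf (x : Fin k → ℝ) : qf (A - B) x = qf A x - qf B x := by
  simp only [qf, sub_mulVec, dotProduct_sub]

lemma smul_qf (c : ℝ) (x : Fin k → ℝ) : qf (c • A) x = c * qf A x := by
  simp only [qf, smul_mulVec, dotProduct_smul, smul_eq_mul]

lemma qf_neg (x : Fin k → ℝ) : qf A (-x) = qf A x := by
  simp only [qf, mulVec_neg, neg_dotProduct, dotProduct_neg, neg_neg]

lemma qf_add (hA : A.IsSymm) (x y : Fin k → ℝ) :
    qf A (x + y) = qf A x + 2 * (x ⬝ᵥ A *ᵥ y) + qf A y := by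
  simp only [qf, mulVec_add, add_dotProduct, dotProduct_add, hA.dotProduct_mulVec_comm y x]
  ring

lemma qf_sub (hA : A.IsSymm) (x y : Fin k → ℝ) :
    qf A (x - y) = qf A x - 2 * (x ⬝ᵥ A *ᵥ y) + qf A y := by
  rw [sub_eq_add_neg, qf_add hA, qf_neg, mulVec_neg, dotProduct_neg]
  ring

lemma qf_transpose_mul_mul {l : ℕ} (Z : Matrix (Fin l) (Fin k) ℝ) (S : Matrix (Fin l) (Fin l) ℝ)
    (x : Fin k → ℝ) : qf (Zᵀ * S * Z) x = qf S (Z *ᵥ x) := by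
  rw [qf, qf, ← mulVec_mulVec, ← mulVec_mulVec, dotProduct_mulVec, vecMul_transpose]

lemma qf_lineMap (hA : A.IsSymm) (θ : ℝ) (x y : Fin k → ℝ) :
    qf A ((1 - θ) • x + θ • y) = (1 - θ) * qf A x + θ * qf A y - θ * (1 - θ) * qf A (y - x) := by
  rw [qf_sub hA y x]
  simp only [qf, mulVec_add, mulVec_smul, dotProduct_add, add_dotProduct,
    dotProduct_smul, smul_dotProduct, smul_eq_mul, hA.dotProduct_mulVec_comm y x]
  ring

lemma qf_inv_add_mulVec (hA : A.IsSymm) (hdet : IsUnit A.det) (x h : Fin k → ℝ) :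
    qf A⁻¹ (x + A *ᵥ h) = qf A⁻¹ x + 2 * (x ⬝ᵥ h) + qf A h := by
  rw [qf_add hA.inv, mulVec_mulVec, nonsing_inv_mul A hdet, one_mulVec]
  congr 1
  rw [qf, qf, mulVec_mulVec, nonsing_inv_mul A hdet, one_mulVec, dotProduct_comm]

lemma qf_sum_le (hA : A.PosSemidef) {ι : Type*} (s : Finset ι) (x : ι → Fin k → ℝ) :
    qf A (∑ i ∈ s, x i) ≤ #s * ∑ i ∈ s, qf A (x i) := by
  have hA' : A.IsSymm := isHermitian_iff_isSymm.mp hA.isHermitian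
  have cross (i j : ι) : x i ⬝ᵥ A *ᵥ x j ≤ (qf A (x i) + qf A (x j)) / 2 := by
    have h := qf_nonneg hA (x i - x j)
    rw [qf_sub hA'] at h
    linarith
  calc qf A (∑ i ∈ s, x i) = ∑ i ∈ s, ∑ j ∈ s, x i ⬝ᵥ A *ᵥ x j := by
        simp only [qf, mulVec_sum, dotProduct_sum, sum_dotProduct]
        exact sum_comm
    _ ≤ ∑ i ∈ s, ∑ j ∈ s, (qf A (x i) + qf A (x j)) / 2 := by gcongr with i _ j _; exact cross i j
    _ = #s * ∑ i ∈ s, qf A (x i) := by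
        simp only [← sum_div, sum_add_distrib, sum_const, nsmul_eq_mul, ← mul_sum]
        ring

lemma qf_sub_le_mul_sum_Icc (hA : A.PosSemidef) (x : ℕ → Fin k → ℝ) (t d : ℕ) :
    qf A (x (t + 1) - x (t - d)) ≤ (d + 1) * ∑ j ∈ Icc (t - d) t, qf A (x (j + 1) - x j) := by
  rw [← sum_Icc_sub (Nat.sub_le t d)]
  refine (qf_sum_le hA _ _).trans
    (mul_le_mul_of_nonneg_right ?_ (sum_nonneg fun j _ => qf_nonneg hA _))
  have hcard : #(Icc (t - d) t) ≤ d + 1 := by rw [Nat.card_Icc]; omega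
  exact_mod_cast hcard

lemma Matrix.PosSemidef.transpose_mul_mul_same {l : ℕ} {S : Matrix (Fin l) (Fin l) ℝ}
    (hS : S.PosSemidef) (Z : Matrix (Fin l) (Fin k) ℝ) : (Zᵀ * S * Z).PosSemidef := by
  simpa only [conjTranspose_eq_transpose_of_trivial] using hS.conjTranspose_mul_mul_same Z

lemma norm_le_sqrt_dotProduct_self (x : Fin k → ℝ) : ‖x‖ ≤ √(x ⬝ᵥ x) := by
  refine (pi_norm_le_iff_of_nonneg (Real.sqrt_nonneg _)).mpr fun i => ?_
  rw [Real.norm_eq_abs]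
  refine Real.abs_le_sqrt ?_
  simpa only [sq, dotProduct] using
    single_le_sum (fun j _ => mul_self_nonneg (x j)) (mem_univ i)

open scoped MatrixOrder in
lemma tendsto_zero_of_tendsto_qf {β : Type*} (hA : A.PosDef) {l : Filter β} {x : β → Fin k → ℝ}
    (h : Tendsto (fun b => qf A (x b)) l (𝓝 0)) : Tendsto x l (𝓝 0) := by
  set R := CFC.sqrt A
  have hRR : R * R = A := CFC.sqrt_mul_sqrt_self A hA.posSemidef.nonneg
  have hR : R.IsSymm := isHermitian_iff_isSymm.mp (CFC.sqrt_nonneg A).posSemidef.isHermitian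
  have hRdet : IsUnit R.det := (isUnit_iff_isUnit_det R).mp
    (isUnit_of_mul_isUnit_left (hRR ▸ hA.isUnit))
  have hqf (b : β) : qf A (x b) = R *ᵥ x b ⬝ᵥ R *ᵥ x b := by
    rw [qf, ← hRR, ← mulVec_mulVec, hR.dotProduct_mulVec_comm, dotProduct_comm,
      hR.dotProduct_mulVec_comm]
  have hRx : Tendsto (fun b => R *ᵥ x b) l (𝓝 0) := by
    refine squeeze_zero_norm (fun b => norm_le_sqrt_dotProduct_self _) ?_
    simpa only [← hqf, Real.sqrt_zero] using h.sqrt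
  have hcont : Continuous (fun y : Fin k → ℝ => R⁻¹ *ᵥ y) :=
    continuous_const.matrix_mulVec continuous_id
  simpa only [Function.comp_def, mulVec_mulVec, nonsing_inv_mul R hRdet, one_mulVec,
    mulVec_zero] using
    (hcont.tendsto 0).comp hRx

end QuadraticForm

section Proximal

variable {k : ℕ}

lemma ConvexOn.prox_three_point {A : Matrix (Fin k) (Fin k) ℝ} {F : (Fin k → ℝ) → ℝ}
    (hF : ConvexOn ℝ Set.univ F) (hA : A.PosSemidef) {u x : Fin k → ℝ}
    (hx : ∀ v, F x + 1 / 2 * qf A (x - u) ≤ F v + 1 / 2 * qf A (v - u)) (v : Fin k → ℝ) :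
    F x + 1 / 2 * qf A (x - u) + 1 / 2 * qf A (v - x) ≤ F v + 1 / 2 * qf A (v - u) := by
  have hA' : A.IsSymm := isHermitian_iff_isSymm.mp hA.isHermitian
  set K := qf A (v - x)
  -- compare `x` with the points `(1 - θ) • x + θ • v` of the segment `[x, v]` and let `θ → 0`
  have hseg : ∀ θ ∈ Set.Ioc (0 : ℝ) 1,
      F x + 1 / 2 * qf A (x - u) + 1 / 2 * K - (F v + 1 / 2 * qf A (v - u)) ≤ θ * (1 / 2 * K) := by
    rintro θ ⟨hθ0, hθ1⟩
    have hconv := hF.2 (Set.mem_univ x) (Set.mem_univ v) (sub_nonneg.2 hθ1) hθ0.le (by ring)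
    have hmin := hx ((1 - θ) • x + θ • v)
    rw [show (1 - θ) • x + θ • v - u = (1 - θ) • (x - u) + θ • (v - u) by module, qf_lineMap hA',
      show v - u - (x - u) = v - x by abel] at hmin
    rw [smul_eq_mul, smul_eq_mul] at hconv
    refine le_of_mul_le_mul_left ?_ hθ0
    linarith
  have hlim : Tendsto (fun θ : ℝ => θ * (1 / 2 * K)) (𝓝[>] 0) (𝓝 0) := by
    simpa using (tendsto_nhdsWithin_of_tendsto_nhds (tendsto_id (x := 𝓝 (0 : ℝ)))).mul_const
      (1 / 2 * K)
  have hgap := ge_of_tendsto hlim (eventually_of_mem (Ioc_mem_nhdsGT one_pos) hseg)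
  linarith

lemma forward_backward_step_le {C H : Matrix (Fin k) (Fin k) ℝ} (hC : C.PosDef)
    {f g : (Fin k → ℝ) → ℝ} {gradf : (Fin k → ℝ) → Fin k → ℝ}
    (hf_conv : ∀ a b, f a + gradf a ⬝ᵥ (b - a) ≤ f b)
    (hf_smooth : ∀ a b, f b ≤ f a + gradf a ⬝ᵥ (b - a) + 1 / 2 * qf H (b - a))
    (hg : ConvexOn ℝ Set.univ g) {y h x : Fin k → ℝ}
    (hx : ∀ v, g x + 1 / 2 * qf C⁻¹ (x - (y - C *ᵥ (gradf y + h)))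
      ≤ g v + 1 / 2 * qf C⁻¹ (v - (y - C *ᵥ (gradf y + h))))
    (v : Fin k → ℝ) :
    f x + g x + (x - v) ⬝ᵥ h + 1 / 2 * qf (C⁻¹ - H) (x - y) + 1 / 2 * qf C⁻¹ (v - x)
      ≤ f v + g v + 1 / 2 * qf C⁻¹ (v - y) := by
  have hC' : C.IsSymm := isHermitian_iff_isSymm.mp hC.isHermitian
  have hdet : IsUnit C.det := (isUnit_iff_isUnit_det C).mp hC.isUnit
  have expand (w : Fin k → ℝ) : qf C⁻¹ (w - (y - C *ᵥ (gradf y + h)))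
      = qf C⁻¹ (w - y) + 2 * ((w - y) ⬝ᵥ (gradf y + h)) + qf C (gradf y + h) := by
    rw [show w - (y - C *ᵥ (gradf y + h)) = (w - y) + C *ᵥ (gradf y + h) by abel,
      qf_inv_add_mulVec hC' hdet]
  have hprox := hg.prox_three_point hC.inv.posSemidef hx v
  rw [expand, expand] at hprox
  have hsmooth := hf_smooth y x
  have hconv := hf_conv y v
  simp only [dotProduct_add, sub_dotProduct, dotProduct_comm (gradf y)] at hprox hsmooth hconv ⊢
  rw [sub_qf]
  linarith

end Proximal

section PrimalDual

variable {n p : ℕ} {Z : Matrix (Fin p) (Fin n) ℝ} {C H : Matrix (Fin n) (Fin n) ℝ}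
  {S : Matrix (Fin p) (Fin p) ℝ} {Hs Hr : (Fin n → ℝ) → ℝ} {gs : (Fin n → ℝ) → Fin n → ℝ}

lemma primal_dual_step_le (hC : C.PosDef) (hS : S.IsSymm) (hSdet : IsUnit S.det)
    (hconv_s : ∀ a b, Hs a + gs a ⬝ᵥ (b - a) ≤ Hs b)
    (hsmooth : ∀ a b, Hs b ≤ Hs a + gs a ⬝ᵥ (b - a) + 1 / 2 * qf H (b - a))
    (hr : ConvexOn ℝ Set.univ Hr) {αs : Fin n → ℝ} {ωs : Fin p → ℝ} (hZαs : Z *ᵥ αs = 0)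
    (hsaddle : ∀ a, Hs αs + Hr αs ≤ (Hs a + Hr a) + ωs ⬝ᵥ (Z *ᵥ a))
    {y x a : Fin n → ℝ} {w w' : Fin p → ℝ}
    (hx : ∀ v, Hr x + 1 / 2 * qf C⁻¹ (x - (y - C *ᵥ (gs y + Zᵀ *ᵥ w + (Zᵀ * S * Z) *ᵥ a)))
      ≤ Hr v + 1 / 2 * qf C⁻¹ (v - (y - C *ᵥ (gs y + Zᵀ *ᵥ w + (Zᵀ * S * Z) *ᵥ a))))
    (hw' : w' = w + (S * Z) *ᵥ x) :
    qf S⁻¹ (ωs - w') + qf C⁻¹ (αs - x) + qf (Zᵀ * S * Z) a + qf (C⁻¹ - H) (x - y)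
      ≤ qf S⁻¹ (ωs - w) + qf C⁻¹ (αs - y) + qf (Zᵀ * S * Z) (x - a) := by
  simp only [add_assoc (gs y)] at hx
  have hfb := forward_backward_step_le hC hconv_s hsmooth hr hx αs
  have hpair : (x - αs) ⬝ᵥ (Zᵀ *ᵥ w + (Zᵀ * S * Z) *ᵥ a)
      = Z *ᵥ x ⬝ᵥ w + Z *ᵥ x ⬝ᵥ S *ᵥ Z *ᵥ a := by
    rw [← mulVec_mulVec, ← mulVec_mulVec, ← mulVec_add, dotProduct_mulVec, vecMul_transpose,
      mulVec_sub, hZαs, sub_zero, dotProduct_add]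
  have hdual : qf S⁻¹ (ωs - w')
      = qf S⁻¹ (ωs - w) - 2 * (Z *ᵥ x ⬝ᵥ (ωs - w)) + qf S (Z *ᵥ x) := by
    rw [hw', ← mulVec_mulVec, show ωs - (w + S *ᵥ Z *ᵥ x) = (ωs - w) + S *ᵥ -(Z *ᵥ x) by
      rw [mulVec_neg]; abel, qf_inv_add_mulVec hS hSdet, qf_neg, dotProduct_neg,
      dotProduct_comm]
    ring
  have hpolar := qf_sub hS (Z *ᵥ x) (Z *ᵥ a)
  have hsad := hsaddle x
  rw [hpair] at hfb
  rw [hdual, qf_transpose_mul_mul, qf_transpose_mul_mul, mulVec_sub]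
  simp only [dotProduct_sub, dotProduct_comm ωs] at hsad ⊢
  linarith

lemma delayed_primal_dual_descent (hC : C.PosDef) (hS : S.PosDef)
    (hconv_s : ∀ a b, Hs a + gs a ⬝ᵥ (b - a) ≤ Hs b)
    (hsmooth : ∀ a b, Hs b ≤ Hs a + gs a ⬝ᵥ (b - a) + 1 / 2 * qf H (b - a))
    (hr : ConvexOn ℝ Set.univ Hr) {αs : Fin n → ℝ} {ωs : Fin p → ℝ} (hZαs : Z *ᵥ αs = 0)
    (hsaddle : ∀ a, Hs αs + Hr αs ≤ (Hs a + Hr a) + ωs ⬝ᵥ (Z *ᵥ a))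
    {d : ℕ} {α : ℕ → Fin n → ℝ} {ω : ℕ → Fin p → ℝ}
    (hα : ∀ t v,
      Hr (α (t + 1)) + 1 / 2 * qf C⁻¹ (α (t + 1) -
          (α t - C *ᵥ (gs (α t) + Zᵀ *ᵥ ω (t - d) + (Zᵀ * S * Z) *ᵥ α (t - d))))
        ≤ Hr v + 1 / 2 * qf C⁻¹ (v -
          (α t - C *ᵥ (gs (α t) + Zᵀ *ᵥ ω (t - d) + (Zᵀ * S * Z) *ᵥ α (t - d)))))
    (hω : ∀ t, ω (t + 1) = ω (t - d) + (S * Z) *ᵥ α (t + 1))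
    (hstep : (C⁻¹ - H - Zᵀ * ((1 + d : ℝ) ^ 2 • S) * Z).PosSemidef) (t : ℕ) :
    qf S⁻¹ (ωs - ω (t + 1)) + qf C⁻¹ (αs - α (t + 1)) + qf (Zᵀ * S * Z) (α (t - d))
        + (d + 1) ^ 2 * qf (Zᵀ * S * Z) (α (t + 1) - α t)
      ≤ qf S⁻¹ (ωs - ω (t - d)) + qf C⁻¹ (αs - α t)
        + (d + 1) * ∑ j ∈ Icc (t - d) t, qf (Zᵀ * S * Z) (α (j + 1) - α j) := by
  have hstep_size := qf_nonneg hstep (α (t + 1) - α t)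
  rw [sub_qf, sub_qf, Matrix.mul_smul, Matrix.smul_mul, smul_qf] at hstep_size
  have hdelay := qf_sub_le_mul_sum_Icc (hS.posSemidef.transpose_mul_mul_same Z) α t d
  have hstep_t := primal_dual_step_le hC (isHermitian_iff_isSymm.mp hS.isHermitian)
    ((isUnit_iff_isUnit_det S).mp hS.isUnit) hconv_s hsmooth hr hZαs hsaddle (hα t) (hω t)
  rw [sub_qf] at hstep_t
  linarith

end PrimalDual

section DelayedSums

lemma sum_range_sub_le (ψ : ℕ → ℝ) (hψ : ∀ t, 0 ≤ ψ t) (d N : ℕ) :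
    ∑ t ∈ range N, ψ (t - d) ≤ (d + 1) * ψ 0 + ∑ t ∈ range N, ψ (t + 1) :=
  calc ∑ t ∈ range N, ψ (t - d) ≤ ∑ t ∈ range (d + N), ψ (t - d) :=
        sum_le_sum_of_subset_of_nonneg (range_mono (by omega)) fun _ _ _ => hψ _
    _ = d * ψ 0 + ∑ t ∈ range N, ψ t := by
        rw [sum_range_add, sum_congr rfl fun t ht =>
          congrArg ψ (Nat.sub_eq_zero_of_le (mem_range.1 ht).le)]
        simp
    _ ≤ d * ψ 0 + ∑ t ∈ range (N + 1), ψ t := by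
        rw [sum_range_succ]
        linarith [hψ N]
    _ = (d + 1) * ψ 0 + ∑ t ∈ range N, ψ (t + 1) := by
        rw [sum_range_succ']
        ring

lemma sum_range_sum_Icc_le (δ : ℕ → ℝ) (hδ : ∀ t, 0 ≤ δ t) (d N : ℕ) :
    ∑ t ∈ range N, ∑ j ∈ Icc (t - d) t, δ j ≤ (d + 1) * ∑ t ∈ range N, δ t := by
  -- `δ j` is counted once for each `t ∈ [j, j + d]`
  rw [sum_comm' (t' := range N) (s' := fun j => Icc j (j + d) ∩ range N) fun t j => by
    simp only [mem_range, mem_Icc, mem_inter]; omega, mul_sum]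
  gcongr with j
  rw [sum_const, nsmul_eq_mul]
  gcongr
  · exact hδ j
  · have hcard : #(Icc j (j + d) ∩ range N) ≤ d + 1 :=
      (card_le_card inter_subset_left).trans (by rw [Nat.card_Icc]; omega)
    exact_mod_cast hcard

lemma sum_range_le_of_delayed_descent {d : ℕ} {w a r δ : ℕ → ℝ} (hw : ∀ t, 0 ≤ w t)
    (ha : ∀ t, 0 ≤ a t) (hδ : ∀ t, 0 ≤ δ t)
    (hstep : ∀ t, w (t + 1) + a (t + 1) + r t + (d + 1) ^ 2 * δ t
      ≤ w (t - d) + a t + (d + 1) * ∑ j ∈ Icc (t - d) t, δ j) (N : ℕ) :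
    ∑ t ∈ range N, r t ≤ a 0 + (d + 1) * w 0 := by
  have hsum := sum_le_sum fun t (_ : t ∈ range N) => hstep t
  simp only [sum_add_distrib, ← mul_sum] at hsum
  have hw_shift := sum_range_sub_le w hw d N
  have hδ_count := mul_le_mul_of_nonneg_left (sum_range_sum_Icc_le δ hδ d N)
    (by positivity : (0 : ℝ) ≤ d + 1)
  have ha_tel : ∑ t ∈ range N, (a (t + 1) - a t) = a N - a 0 := sum_range_sub a N
  rw [sum_sub_distrib] at ha_tel
  linarith [ha N]

end DelayedSums

theorem asyn_ddpg_asymptotic_feasibility_general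
    (n p : ℕ) (Z : Matrix (Fin p) (Fin n) ℝ)
    (C Hm : Matrix (Fin n) (Fin n) ℝ) (S : Matrix (Fin p) (Fin p) ℝ)
    (hC : C.PosDef) (hS : S.PosDef)
    (d : ℕ)
    (Hs Hr : (Fin n → ℝ) → ℝ) (gs : (Fin n → ℝ) → (Fin n → ℝ))
    (hconv_s : ∀ a b : Fin n → ℝ, Hs a + gs a ⬝ᵥ (b - a) ≤ Hs b)
    (hsmooth : ∀ a b : Fin n → ℝ, Hs b ≤ Hs a + gs a ⬝ᵥ (b - a) + 1 / 2 * qf Hm (b - a))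
    (hr : ConvexOn ℝ Set.univ Hr)
    (α : ℕ → Fin n → ℝ) (ω : ℕ → Fin p → ℝ)
    (hα : ∀ t : ℕ, ∀ v : Fin n → ℝ,
      Hr (α (t + 1)) + 1 / 2 * qf C⁻¹ (α (t + 1) -
          (α t - C *ᵥ (gs (α t) + Zᵀ *ᵥ ω (t - d) + (Zᵀ * S * Z) *ᵥ α (t - d))))
        ≤ Hr v + 1 / 2 * qf C⁻¹ (v -
          (α t - C *ᵥ (gs (α t) + Zᵀ *ᵥ ω (t - d) + (Zᵀ * S * Z) *ᵥ α (t - d)))))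
    (hω : ∀ t : ℕ, ω (t + 1) = ω (t - d) + (S * Z) *ᵥ α (t + 1))
    (hstep1 : (C⁻¹ - Hm - Zᵀ * (((1 + d : ℝ)) ^ 2 • S) * Z).PosSemidef)
    (hexists : ∃ (αs : Fin n → ℝ) (ωs : Fin p → ℝ), Z *ᵥ αs = 0 ∧
      ∀ a : Fin n → ℝ, Hs αs + Hr αs ≤ (Hs a + Hr a) + ωs ⬝ᵥ (Z *ᵥ a)) :
    Tendsto (fun t : ℕ => ω (t + 1) - ω (t - d)) atTop (nhds 0) ∧
      Tendsto (fun t : ℕ => Z *ᵥ α t) atTop (nhds 0) := by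
  obtain ⟨αs, ωs, hZαs, hsaddle⟩ := hexists
  have hM := hS.posSemidef.transpose_mul_mul_same Z
  have hsummable : Summable fun t => qf (Zᵀ * S * Z) (α (t - d)) :=
    summable_of_sum_range_le (fun t => qf_nonneg hM _) <| sum_range_le_of_delayed_descent
      (w := fun t => qf S⁻¹ (ωs - ω t)) (a := fun t => qf C⁻¹ (αs - α t))
      (δ := fun j => qf (Zᵀ * S * Z) (α (j + 1) - α j))
      (fun t => qf_nonneg hS.inv.posSemidef _) (fun t => qf_nonneg hC.inv.posSemidef _)
      (fun t => qf_nonneg hM _)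
      (delayed_primal_dual_descent hC hS hconv_s hsmooth hr hZαs hsaddle hα hω hstep1)
  have hZα : Tendsto (fun t => Z *ᵥ α t) atTop (𝓝 0) := by
    refine tendsto_zero_of_tendsto_qf hS ?_
    simpa only [Nat.add_sub_cancel, qf_transpose_mul_mul] using
      (tendsto_add_atTop_iff_nat d).mpr hsummable.tendsto_atTop_zero
  have hSZα : Tendsto (fun t => S *ᵥ Z *ᵥ α (t + 1)) atTop (𝓝 0) := by
    simpa only [Function.comp_def, id, mulVec_zero] using
      ((continuous_const (y := S).matrix_mulVec continuous_id).tendsto 0).comp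
        ((tendsto_add_atTop_iff_nat 1).mpr hZα)
  refine ⟨?_, hZα⟩
  simpa only [hω, mulVec_mulVec, add_sub_cancel_left] using hSZα

/-- Theorem 2, asymptotic feasibility: `ω(t+1) − ω((t−d)⁺) → 0`
and `Z·α(t) → 0`. -/
theorem asyn_ddpg_asymptotic_feasibility
    (n p : ℕ) (Z : Matrix (Fin p) (Fin n) ℝ)
    (C Hm : Matrix (Fin n) (Fin n) ℝ) (S : Matrix (Fin p) (Fin p) ℝ)
    (hC : C.PosDef) (hHm : Hm.PosDef) (hS : S.PosDef)
    (d : ℕ) (hd : 1 ≤ d)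
    (Hs Hr : (Fin n → ℝ) → ℝ) (gs : (Fin n → ℝ) → (Fin n → ℝ))
    (hconv_s : ∀ a b : Fin n → ℝ, Hs a + gs a ⬝ᵥ (b - a) ≤ Hs b)
    (hsmooth : ∀ a b : Fin n → ℝ, Hs b ≤ Hs a + gs a ⬝ᵥ (b - a) + 1 / 2 * qf Hm (b - a))
    (hr : ConvexOn ℝ Set.univ Hr)
    (α : ℕ → Fin n → ℝ) (ω : ℕ → Fin p → ℝ)
    (hα : ∀ t : ℕ, ∀ v : Fin n → ℝ,
      Hr (α (t + 1)) + 1 / 2 * qf C⁻¹ (α (t + 1) -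
          (α t - C *ᵥ (gs (α t) + Zᵀ *ᵥ ω (t - d) + (Zᵀ * S * Z) *ᵥ α (t - d))))
        ≤ Hr v + 1 / 2 * qf C⁻¹ (v -
          (α t - C *ᵥ (gs (α t) + Zᵀ *ᵥ ω (t - d) + (Zᵀ * S * Z) *ᵥ α (t - d)))))
    (hω : ∀ t : ℕ, ω (t + 1) = ω (t - d) + (S * Z) *ᵥ α (t + 1))
    (hstep1 : (C⁻¹ - Hm - Zᵀ * (((1 + d : ℝ)) ^ 2 • S) * Z).PosSemidef)
    (hstep2 : (C⁻¹ - Zᵀ * S * Z).PosDef)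
    (κ : ℝ) (hκ : 0 ≤ κ) (hbound : ∀ t : ℕ, qf (Zᵀ * S * Z) (α t) ≤ κ ^ 2)
    (hexists : ∃ (αs : Fin n → ℝ) (ωs : Fin p → ℝ), Z *ᵥ αs = 0 ∧
      ∀ a : Fin n → ℝ, Hs αs + Hr αs ≤ (Hs a + Hr a) + ωs ⬝ᵥ (Z *ᵥ a)) :
    Tendsto (fun t : ℕ => ω (t + 1) - ω (t - d)) atTop (nhds 0) ∧
      Tendsto (fun t : ℕ => Z *ᵥ α t) atTop (nhds 0) :=
  asyn_ddpg_asymptotic_feasibility_general n p Z C Hm S hC hS d Hs Hr gs hconv_s hsmooth hr α ω hα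
    hω hstep1 hexists
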